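/- Let h_n = φ_m^n(0) for n ≥ 0. For every odd n ≥ 1, h_{n−1} h_{n−3} ⋯ h_2 h_0 · z_n = h_n h_{n−2} ⋯ h_3 h_1, and for every even n ≥ 0, h_{n−1} h_{n−3} ⋯ h_3 h_1 · z_n = h_n h_{n−2} ⋯ h_2 h_0 (the empty product is the empty word). -/
import Mathlib


/-- The `m`-bonacci morphism `φ_m` on letters:
`φ_m(k) = 0·(k+1)` for `0 ≤ k ≤ m-2`, and `φ_m(m-1) = 0`. -/
def phiL (m a : ℕ) : List ℕ := if a = m - 1 then [0] else [0, a + 1]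

/-- The `m`-bonacci morphism applied to a finite word. -/
def phiW (m : ℕ) (u : List ℕ) : List ℕ := u.flatMap (phiL m)

/-- The iterates `h n = φ_mⁿ(0)`. -/
def hword (m : ℕ) : ℕ → List ℕ
  | 0 => [0]
  | n + 1 => phiW m (hword m n)

/-- The `m`-bonacci word, the infinite fixed point of `φ_m` beginning with `0`
(its `i`-th letter is the `i`-th letter of any sufficiently long iterate `φ_mⁿ(0)`). -/
def mbon (m : ℕ) : ℕ → ℕ := fun i => (hword m (i + 1)).getD i 0

/-- Auxiliary course-of-values construction for the p-singular words:
`zsAux m (k+1) i` gives the correct value of the (index-shifted) p-singular word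
`z_{i-1}` for every `i ≤ k`. -/
def zsAux (m : ℕ) : ℕ → ℕ → List ℕ
  | 0, _ => []
  | k + 1, i =>
    if i < k then zsAux m k i
    else if i = 0 then []
    else if i = 1 then [0]
    else if i ≤ m then
      -- here `i = n+1` with `1 ≤ n ≤ m-1`:
      -- `z_n = z_{n-2} z_{n-3} ⋯ z_1 z_0 · n · z_0 z_1 ⋯ z_{n-3} z_{n-2}`
      (((List.range (i - 2)).map (fun j => zsAux m k (i - 2 - j))).flatten)
        ++ [i - 1]
        ++ (((List.range (i - 2)).map (fun j => zsAux m k (1 + j))).flatten)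
    else
      -- here `i = n+1` with `n ≥ m`:
      -- `z_n = z_{n-2} ⋯ z_{n-(m-1)} · z_{n-m} · z_{n-(m+1)} · z_{n-m} · z_{n-(m-1)} ⋯ z_{n-2}`
      (((List.range (m - 2)).map (fun j => zsAux m k (i - 2 - j))).flatten)
        ++ zsAux m k (i - m) ++ zsAux m k (i - m - 1) ++ zsAux m k (i - m)
        ++ (((List.range (m - 2)).map (fun j => zsAux m k (i - m + 1 + j))).flatten)

/-- The (index-shifted) p-singular words for the `m`-bonacci word:
`zsw m 0 = z₋₁ = ε`, and `zsw m (n+1) = zₙ` for `n ≥ 0`, where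
`z₀ = 0`, `zₙ = z_{n-2} z_{n-3} ⋯ z_1 z_0 · n · z_0 z_1 ⋯ z_{n-3} z_{n-2}` for `1 ≤ n ≤ m-1`
(`n` denoting the single letter `n`), and
`zₙ = z_{n-2} z_{n-3} ⋯ z_{n-(m-1)} z_{n-m} z_{n-(m+1)} z_{n-m} z_{n-(m-1)} ⋯ z_{n-3} z_{n-2}`
for `n ≥ m`. -/
def zsw (m k : ℕ) : List ℕ := zsAux m (k + 1) k

/-- `hAlt m n = h_{n-1} h_{n-3} h_{n-5} ⋯` is the product of the iterates
`h_k = φ_mᵏ(0)` with indices of the same parity as `n-1`, descending from `n-1`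
down to `0` (if `n` is odd) or `1` (if `n` is even); the empty product (`n = 0`)
is the empty word. -/
def hAlt (m : ℕ) : ℕ → List ℕ
  | 0 => []
  | 1 => hword m 0
  | n + 2 => hword m (n + 1) ++ hAlt m n

-- auxiliary defs/lemmas
def hprodD (m s : ℕ) : ℕ → List ℕ
  | 0 => []
  | c + 1 => hword m (s + c) ++ hprodD m s c

lemma phiW_append (m : ℕ) (u v : List ℕ) :
    phiW m (u ++ v) = phiW m u ++ phiW m v := by
  simp [phiW]

lemma phiW_hprodD (m s c : ℕ) : phiW m (hprodD m s c) = hprodD m (s + 1) c := by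
  induction c with
  | zero => rfl
  | succ c ih =>
    show phiW m (hword m (s + c) ++ hprodD m s c) = hword m (s + 1 + c) ++ hprodD m (s + 1) c
    rw [phiW_append, ih, show phiW m (hword m (s + c)) = hword m (s + c + 1) from rfl,
      show s + c + 1 = s + 1 + c by omega]

lemma hprodD_split (m s c : ℕ) : hprodD m s (c + 1) = hprodD m (s + 1) c ++ hword m s := by
  induction c with
  | zero => simp [hprodD]
  | succ c ih =>
    show hword m (s + (c + 1)) ++ hprodD m s (c + 1) = hword m (s + 1 + c) ++ hprodD m (s + 1) c ++ hword m s
    rw [ih, show s + (c + 1) = s + 1 + c by omega, List.append_assoc]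

lemma hword_small (m : ℕ) (hm : 2 ≤ m) :
    ∀ n, 1 ≤ n → n ≤ m - 1 → hword m n = hprodD m 0 n ++ [n] := by
  intro n
  induction n with
  | zero => omega
  | succ k ih =>
    intro _ hle
    rcases Nat.eq_zero_or_pos k with h0 | hk
    · subst h0
      have h0' : (0 : ℕ) ≠ m - 1 := by omega
      simp [hword, phiW, phiL, hprodD, h0']
    · have hk' : k ≤ m - 1 := by omega
      have hne : k ≠ m - 1 := by omega
      have hphi : phiW m [k] = [0, k + 1] := by simp [phiW, phiL, hne]
      rw [show hword m (k + 1) = phiW m (hword m k) from rfl, ih hk hk',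
        phiW_append, phiW_hprodD, hphi, hprodD_split]
      simp [hword]

lemma hword_big (m : ℕ) (hm : 2 ≤ m) (d : ℕ) : hword m (m + d) = hprodD m d m := by
  induction d with
  | zero =>
    have e : m + 0 = (m - 1) + 1 := by omega
    have hphi : phiW m [m - 1] = [0] := by simp [phiW, phiL]
    rw [e, show hword m ((m - 1) + 1) = phiW m (hword m (m - 1)) from rfl,
      hword_small m hm (m - 1) (by omega) le_rfl, phiW_append, phiW_hprodD, hphi,
      show m = (m - 1) + 1 from by omega, hprodD_split]
    simp [hword]
  | succ d ih =>
    rw [show m + (d + 1) = (m + d) + 1 from rfl,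
      show hword m ((m + d) + 1) = phiW m (hword m (m + d)) from rfl, ih, phiW_hprodD]

lemma zsAux_stable (m : ℕ) : ∀ k i, i < k → zsAux m k i = zsw m i := by
  intro k
  induction k with
  | zero => omega
  | succ k ih =>
    intro i hi
    rcases Nat.lt_or_ge i k with h' | h'
    · have e : zsAux m (k + 1) i = zsAux m k i := by
        rw [zsAux]; simp [h']
      rw [e, ih i h']
    · have : i = k := by omega
      subst this; rfl

lemma zsw_zero (m : ℕ) : zsw m 0 = [] := by
  show zsAux m 1 0 = []
  rw [zsAux]; simp

lemma zsw_one (m : ℕ) : zsw m 1 = [0] := by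
  show zsAux m 2 1 = [0]
  rw [zsAux]; simp

lemma Lasc (m c : ℕ) : ∀ a, (∀ t, t < a + c → hAlt m t ++ zsw m (t + 1) = hAlt m (t + 1)) →
    hAlt m a ++ (((List.range c).map (fun j => zsw m (a + 1 + j))).flatten) = hAlt m (a + c) := by
  induction c with
  | zero => simp
  | succ c ih =>
    intro a H
    rw [List.range_succ, List.map_append, List.flatten_append, ← List.append_assoc,
      ih a (fun t ht => H t (by omega))]
    simp only [List.map_cons, List.map_nil, List.flatten_cons, List.flatten_nil,
      List.append_nil]
    rw [show a + 1 + c = a + c + 1 by omega, H (a + c) (by omega),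
      show a + (c + 1) = a + c + 1 by omega]

lemma Ldesc (m c : ℕ) : ∀ s, (∀ t, t < s + c → hAlt m t ++ zsw m (t + 1) = hAlt m (t + 1)) →
    hAlt m (s + c + 1) ++ (((List.range c).map (fun j => zsw m (s + c - j))).flatten)
      = hprodD m (s + 1) c ++ hAlt m (s + 1) := by
  induction c with
  | zero => simp [hprodD]
  | succ c ih =>
    intro s H
    rw [List.range_succ, List.map_append, List.flatten_append, ← List.append_assoc]
    have efn : (fun j => zsw m (s + (c + 1) - j)) = (fun j => zsw m (s + 1 + c - j)) := by
      funext j; congr 1; omega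
    rw [efn, show s + (c + 1) + 1 = (s + 1) + c + 1 by omega,
      ih (s + 1) (fun t ht => H t (by omega))]
    simp only [List.map_cons, List.map_nil, List.flatten_cons, List.flatten_nil,
      List.append_nil]
    rw [show s + 1 + c - c = s + 1 by omega,
      show hAlt m (s + 1 + 1) = hword m (s + 1) ++ hAlt m s from rfl,
      hprodD_split m (s + 1) c]
    rw [List.append_assoc, List.append_assoc, List.append_assoc, H s (by omega)]

lemma Lmid (m d : ℕ) (H : ∀ t, t < d → hAlt m t ++ zsw m (t + 1) = hAlt m (t + 1)) :
    hAlt m (d + 1) ++ zsw m d = hword m d ++ hAlt m d := by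
  cases d with
  | zero => simp [hAlt, hword, zsw_zero]
  | succ e =>
    rw [show hAlt m (e + 2) = hword m (e + 1) ++ hAlt m e from rfl, List.append_assoc,
      H e (by omega)]

lemma smallcase (m p : ℕ) (hm : 2 ≤ m) (hpm : p + 2 ≤ m)
    (IH : ∀ t, t < p + 1 → hAlt m t ++ zsw m (t + 1) = hAlt m (t + 1)) :
    hAlt m (p + 1) ++ (((List.range p).map (fun j => zsw m (p - j))).flatten
      ++ [p + 1] ++ ((List.range p).map (fun j => zsw m (1 + j))).flatten)
      = hAlt m (p + 2) := by
  have hd := Ldesc m p 0 (fun t ht => IH t (by omega))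
  simp only [Nat.zero_add] at hd
  have ha := Lasc m p 0 (fun t ht => IH t (by omega))
  simp only [Nat.zero_add] at ha
  rw [show hAlt m 0 = ([] : List ℕ) from rfl, List.nil_append] at ha
  have hsp : hprodD m 0 (p + 1) = hprodD m 1 p ++ hword m 0 := by
    simpa using hprodD_split m 0 p
  simp only [← List.append_assoc]
  rw [hd, show hAlt m 1 = hword m 0 from rfl, ← hsp,
    ← hword_small m hm (p + 1) (by omega) (by omega), ha]
  rfl

lemma bigcase (m q d : ℕ) (hm : m = q + 2)
    (IH : ∀ t, t < q + d + 2 → hAlt m t ++ zsw m (t + 1) = hAlt m (t + 1)) :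
    hAlt m (d + 1 + q + 1) ++
      (((List.range q).map (fun j => zsw m (d + 1 + q - j))).flatten
        ++ zsw m (d + 1) ++ zsw m d ++ zsw m (d + 1)
        ++ ((List.range q).map (fun j => zsw m (d + 1 + 1 + j))).flatten)
      = hAlt m (q + d + 3) := by
  have hd := Ldesc m q (d + 1) (fun t ht => IH t (by omega))
  have ha := Lasc m q (d + 1) (fun t ht => IH t (by omega))
  have i_d : hAlt m d ++ zsw m (d + 1) = hAlt m (d + 1) := IH d (by omega)
  have lm := Lmid m d (fun t ht => IH t (by omega))
  have hw : hprodD m (d + 2) q ++ hword m (d + 1) ++ hword m d = hword m (q + 2 + d) := by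
    have hb := hword_big m (by omega) d
    rw [show m + d = q + 2 + d from by omega] at hb
    rw [hb, show m = q + 1 + 1 from by omega, hprodD_split, hprodD_split,
      show (d : ℕ) + 1 + 1 = d + 2 from rfl]
  simp only [← List.append_assoc]
  rw [hd, show hAlt m (d + 2) = hword m (d + 1) ++ hAlt m d from rfl]
  simp only [← List.append_assoc]
  rw [List.append_assoc (hprodD m (d + 2) q ++ hword m (d + 1)) (hAlt m d) (zsw m (d + 1)),
    i_d,
    List.append_assoc (hprodD m (d + 2) q ++ hword m (d + 1)) (hAlt m (d + 1)) (zsw m d),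
    lm]
  simp only [← List.append_assoc]
  rw [hw, List.append_assoc (hword m (q + 2 + d)) (hAlt m d) (zsw m (d + 1)), i_d,
    List.append_assoc (hword m (q + 2 + d)) (hAlt m (d + 1)), ha,
    show d + 1 + q = q + d + 1 from by omega, show q + 2 + d = q + d + 2 from by omega]
  rfl


/-- For every odd `n ≥ 1`, `h_{n-1} h_{n-3} ⋯ h_2 h_0 · zₙ = h_n h_{n-2} ⋯ h_3 h_1`, and
for every even `n ≥ 0`, `h_{n-1} h_{n-3} ⋯ h_3 h_1 · zₙ = h_n h_{n-2} ⋯ h_2 h_0`: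
both cases are exactly the equation `hAlt m n ++ zₙ = hAlt m (n+1)`. -/
theorem psingular_hprod (m : ℕ) (hm : 2 ≤ m) (n : ℕ) :
    hAlt m n ++ zsw m (n + 1) = hAlt m (n + 1) := by
  induction n using Nat.strong_induction_on with
  | _ n IH =>
  rcases n with _ | p
  · rw [zsw_one]; rfl
  · rw [show zsw m (p + 1 + 1) = zsAux m (p + 3) (p + 2) from rfl, zsAux,
      if_neg (lt_irrefl _), if_neg (by omega : (p : ℕ) + 2 ≠ 0),
      if_neg (by omega : (p : ℕ) + 2 ≠ 1)]
    by_cases hsm : p + 2 ≤ m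
    · rw [if_pos hsm, show (p : ℕ) + 2 - 2 = p from rfl, show (p : ℕ) + 2 - 1 = p + 1 from rfl]
      have e1 : (List.range p).map (fun j => zsAux m (p + 2) (p - j))
          = (List.range p).map (fun j => zsw m (p - j)) :=
        List.map_congr_left fun j hj => zsAux_stable m (p + 2) (p - j) (by omega)
      have e2 : (List.range p).map (fun j => zsAux m (p + 2) (1 + j))
          = (List.range p).map (fun j => zsw m (1 + j)) :=
        List.map_congr_left fun j hj => by
          have := List.mem_range.mp hj
          exact zsAux_stable m (p + 2) (1 + j) (by omega)
      rw [e1, e2]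
      exact smallcase m p hm hsm (fun t ht => IH t (by omega))
    · rw [if_neg hsm]
      obtain ⟨q, hq⟩ : ∃ q, m = q + 2 := ⟨m - 2, by omega⟩
      obtain ⟨d, hdq⟩ : ∃ d, p = q + 1 + d := ⟨p - (q + 1), by omega⟩
      rw [show m - 2 = q from by omega,
        show p + 2 - m = d + 1 from by omega,
        show (d : ℕ) + 1 - 1 = d from rfl]
      have e1 : (List.range q).map (fun j => zsAux m (p + 2) (p + 2 - 2 - j))
          = (List.range q).map (fun j => zsw m (d + 1 + q - j)) :=
        List.map_congr_left fun j hj => by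
          rw [show p + 2 - 2 - j = d + 1 + q - j from by omega]
          exact zsAux_stable m (p + 2) (d + 1 + q - j) (by omega)
      have e2 : (List.range q).map (fun j => zsAux m (p + 2) (d + 1 + 1 + j))
          = (List.range q).map (fun j => zsw m (d + 1 + 1 + j)) :=
        List.map_congr_left fun j hj => by
          have := List.mem_range.mp hj
          exact zsAux_stable m (p + 2) (d + 1 + 1 + j) (by omega)
      rw [e1, e2, zsAux_stable m (p + 2) (d + 1) (by omega),
        zsAux_stable m (p + 2) d (by omega),
        show p + 1 + 1 = q + d + 3 from by omega,
        show p + 1 = d + 1 + q + 1 from by omega]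
      exact bigcase m q d hq (fun t ht => IH t (by omega))
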